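/- arXiv:2604.25893 — 4 statements merged into one kernel-verified Lean document; each statement's English description precedes it below -/
import Mathlib

section
/- Let $X \subseteq \mathbb{Z}$ be a finite set with $|X| \geq 100$, and let $P$ be the smallest arithmetic progression containing $X$. If $|X|/|P| > 2/5$, then $P \subseteq 9X - 8X$. -/
/-- `P` is a (1-dimensional) arithmetic progression `{u, u+v, …, u+l·v}` with `v ≠ 0`. -/
def IsAP (P : Finset ℤ) : Prop :=
  ∃ (u v : ℤ) (l : ℕ), v ≠ 0 ∧ P = (Finset.range (l + 1)).image (fun i : ℕ => u + (i : ℤ) * v)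

/-- The set `mX - nX` of sums of `m` elements of `X` minus sums of `n` elements of `X`. -/
def sumsetSub (m n : ℕ) (X : Finset ℤ) : Set ℤ :=
  {z | ∃ (x : Fin m → ℤ) (y : Fin n → ℤ), (∀ i, x i ∈ X) ∧ (∀ j, y j ∈ X) ∧
    z = (∑ i, x i) - (∑ j, y j)}

/-!
Read `X` in the coordinates of `P`: it becomes a set `Y ⊆ [0, l]` of `n > 2(l + 1)/5` indices, and
minimality of `P` puts `0` and `l` into `Y` and forbids `Y` to lie in one residue class mod 2.
Every `p ∈ [0, l]` is within `(l + 2 - n)/2` of some `x ∈ Y`, because the gap around `p` is free of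
`Y`. The translates `Y`, `Y + t`, `Y + 2t` of `Y` cannot be disjoint inside `[0, l + 2t]` when
`3n > l + 2t + 1`, so `2t` is a sum of two elements of `Y - Y`; three such blocks give every even
number up to about `3(3n - l)`, which exceeds `|p - x|`. A smallest positive odd difference `d`
of `Y` corrects the parity: either `d = 1`, or `Y`, `Y + 1` and the gap between two elements of
`Y` at distance `d` are disjoint inside `[0, l + 1]`, which makes `d` small.
Altogether `p ∈ x + 8 (Y - Y) ⊆ 9Y - 8Y`.
-/

open Finset Pointwise

section SumsetSub

variable {X : Finset ℤ} {m n m' n' : ℕ} {z w : ℤ}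

lemma mem_sumsetSub_one_zero (hz : z ∈ X) : z ∈ sumsetSub 1 0 X :=
  ⟨fun _ => z, Fin.elim0, fun _ => hz, fun j => j.elim0, by simp⟩

lemma mem_sumsetSub_one_one_of_mem_sub (hz : z ∈ X - X) : z ∈ sumsetSub 1 1 X := by
  obtain ⟨a, ha, b, hb, rfl⟩ := mem_sub.1 hz
  exact ⟨fun _ => a, fun _ => b, fun _ => ha, fun _ => hb, by simp⟩

lemma add_mem_sumsetSub (hz : z ∈ sumsetSub m n X) (hw : w ∈ sumsetSub m' n' X) :
    z + w ∈ sumsetSub (m + m') (n + n') X := by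
  obtain ⟨x, y, hx, hy, rfl⟩ := hz
  obtain ⟨x', y', hx', hy', rfl⟩ := hw
  refine ⟨Fin.append x x', Fin.append y y', Fin.addCases (by simpa) (by simpa),
    Fin.addCases (by simpa) (by simpa), ?_⟩
  simp only [Fin.sum_univ_add, Fin.append_left, Fin.append_right]
  ring

lemma neg_mem_sumsetSub (hz : z ∈ sumsetSub m n X) : -z ∈ sumsetSub n m X := by
  obtain ⟨x, y, hx, hy, rfl⟩ := hz
  exact ⟨y, x, hy, hx, by ring⟩

lemma affine_mem_sumsetSub_image (hz : z ∈ sumsetSub m n X) (u v : ℤ) :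
    (m - n : ℤ) * u + z * v ∈ sumsetSub m n (X.image fun i => u + i * v) := by
  obtain ⟨x, y, hx, hy, rfl⟩ := hz
  refine ⟨fun i => u + x i * v, fun j => u + y j * v, fun i => mem_image_of_mem _ (hx i),
    fun j => mem_image_of_mem _ (hy j), ?_⟩
  simp only [sum_add_distrib, ← sum_mul, sum_const, card_univ, Fintype.card_fin, nsmul_eq_mul]
  ring

end SumsetSub

section Counting

variable {Y : Finset ℤ} {l : ℤ}

lemma card_add_card_le_of_disjoint {A B S : Finset ℤ} (hA : A ⊆ S) (hB : B ⊆ S)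
    (h : Disjoint A B) : #A + #B ≤ #S :=
  card_union_of_disjoint h ▸ card_le_card (union_subset hA hB)

lemma disjoint_vadd_finset_of_sub_notMem_sub {s t : ℤ} (h : t - s ∉ Y - Y) :
    Disjoint (s +ᵥ Y) (t +ᵥ Y) := by
  rw [disjoint_left]
  rintro _ ha' hb'
  obtain ⟨a, ha, rfl⟩ := mem_vadd_finset.1 ha'
  obtain ⟨b, hb, hab⟩ := mem_vadd_finset.1 hb'
  exact h (mem_sub.2 ⟨a, ha, b, hb, by simp only [vadd_eq_add] at hab; omega⟩)

lemma vadd_finset_subset_Icc (hY : Y ⊆ Icc 0 l) {s t : ℤ} (hs : 0 ≤ s) (hst : s ≤ t) :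
    s +ᵥ Y ⊆ Icc 0 (l + t) := by
  intro _ hz
  obtain ⟨y, hy, rfl⟩ := mem_vadd_finset.1 hz
  have := mem_Icc.1 (hY hy)
  simp only [vadd_eq_add, mem_Icc]
  omega

lemma mem_sub_or_two_mul_mem_sub (hY : Y ⊆ Icc 0 l) {t : ℤ} (ht : 0 ≤ t)
    (hcard : #(Icc 0 (l + 2 * t)) < 3 * #Y) : t ∈ Y - Y ∨ 2 * t ∈ Y - Y := by
  by_contra! ⟨h1, h2⟩
  have h01 : Disjoint ((0 : ℤ) +ᵥ Y) (t +ᵥ Y) :=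
    disjoint_vadd_finset_of_sub_notMem_sub (by simpa using h1)
  have h12 : Disjoint (((0 : ℤ) +ᵥ Y) ∪ (t +ᵥ Y)) ((2 * t) +ᵥ Y) :=
    disjoint_union_left.2 ⟨disjoint_vadd_finset_of_sub_notMem_sub (by simpa using h2),
      disjoint_vadd_finset_of_sub_notMem_sub (by rwa [show 2 * t - t = t by ring])⟩
  have := card_add_card_le_of_disjoint
    (union_subset (vadd_finset_subset_Icc hY le_rfl (by omega))
      (vadd_finset_subset_Icc hY ht (by omega)))
    (vadd_finset_subset_Icc hY (by omega) le_rfl) h12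
  rw [card_union_of_disjoint h01] at this
  simp only [card_vadd_finset] at this
  omega

lemma exists_mem_two_mul_abs_sub_add_card_le (hY : Y ⊆ Icc 0 l) (h0 : 0 ∈ Y) (hl : l ∈ Y)
    {p : ℤ} (hp : p ∈ Icc 0 l) : ∃ x ∈ Y, 2 * |p - x| + #Y ≤ l + 2 := by
  obtain ⟨x, hx, hmin⟩ := exists_min_image Y (fun y => |p - y|) ⟨0, h0⟩
  refine ⟨x, hx, ?_⟩
  set m := |p - x|
  have hp := mem_Icc.1 hp
  have hm0 := hmin 0 h0
  have hml := hmin l hl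
  simp only [abs_eq_max_neg] at hm0 hml
  have hgap : Disjoint Y (Icc (p - m + 1) (p + m - 1)) := disjoint_left.2 fun y hy hyG => by
    have := hmin y hy
    rw [mem_Icc] at hyG
    simp only [abs_eq_max_neg] at this
    omega
  have := card_add_card_le_of_disjoint hY (Icc_subset_Icc (by omega) (by omega)) hgap
  simp only [Int.card_Icc] at this
  omega

lemma neg_mem_sub_self {d : ℤ} (hd : d ∈ Y - Y) : -d ∈ Y - Y := by
  obtain ⟨a, ha, b, hb, rfl⟩ := mem_sub.1 hd
  exact mem_sub.2 ⟨b, hb, a, ha, by ring⟩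

lemma exists_odd_mem_sub_eq_one_or_add_two_mul_card_le (hY : Y ⊆ Icc 0 l)
    (hodd : ∃ d ∈ Y - Y, Odd d) : ∃ d ∈ Y - Y, Odd d ∧ 0 < d ∧ (d = 1 ∨ d + 2 * #Y ≤ l + 4) := by
  set D := (Y - Y).filter fun d => Odd d ∧ 0 < d
  have hD : D.Nonempty := by
    obtain ⟨d, hd, hdodd⟩ := hodd
    rcases lt_or_gt_of_ne (ne_of_apply_ne Odd (by simpa using hdodd) : d ≠ 0) with hneg | hpos
    · exact ⟨-d, mem_filter.2 ⟨neg_mem_sub_self hd, hdodd.neg, by omega⟩⟩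
    · exact ⟨d, mem_filter.2 ⟨hd, hdodd, hpos⟩⟩
  obtain ⟨hdY, hdodd, hdpos⟩ := mem_filter.1 (D.min'_mem hD)
  have hmin : ∀ d ∈ Y - Y, Odd d → 0 < d → D.min' hD ≤ d :=
    fun d hd hodd hpos => D.min'_le d (mem_filter.2 ⟨hd, hodd, hpos⟩)
  refine ⟨_, hdY, hdodd, hdpos, or_iff_not_imp_left.2 fun hd1 => ?_⟩
  obtain ⟨b, hb, a, ha, hab⟩ := mem_sub.1 hdY
  rw [← hab] at hdodd hdpos hmin hd1 ⊢
  rw [Int.odd_iff] at hdodd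
  have h1 : 1 ∉ Y - Y := fun h => by have := hmin 1 h odd_one one_pos; omega
  -- a minimal odd difference `b - a` splits at any `y` strictly between into a smaller one
  have hgap : ∀ y ∈ Y, y ≤ a ∨ b ≤ y := by
    intro y hy
    by_contra! ⟨hay, hyb⟩
    rcases Int.emod_two_eq_zero_or_one (y - a) with h | h
    · have := hmin (b - y) (mem_sub.2 ⟨b, hb, y, hy, rfl⟩) (Int.odd_iff.2 (by omega)) (by omega)
      omega
    · have := hmin (y - a) (mem_sub.2 ⟨y, hy, a, ha, rfl⟩) (Int.odd_iff.2 h) (by omega)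
      omega
  have hYY : Disjoint ((0 : ℤ) +ᵥ Y) ((1 : ℤ) +ᵥ Y) :=
    disjoint_vadd_finset_of_sub_notMem_sub (by simpa)
  have hG : Disjoint (((0 : ℤ) +ᵥ Y) ∪ ((1 : ℤ) +ᵥ Y)) (Icc (a + 2) (b - 1)) := by
    rw [disjoint_left]
    intro z hz hzG
    rw [mem_union, mem_vadd_finset, mem_vadd_finset] at hz
    rw [mem_Icc] at hzG
    rcases hz with ⟨y, hy, rfl⟩ | ⟨y, hy, rfl⟩ <;>
      · have := hgap y hy
        simp only [vadd_eq_add] at hzG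
        omega
  have ha' := mem_Icc.1 (hY ha)
  have hb' := mem_Icc.1 (hY hb)
  have := card_add_card_le_of_disjoint
    (union_subset (vadd_finset_subset_Icc hY le_rfl zero_le_one)
      (vadd_finset_subset_Icc hY zero_le_one le_rfl))
    (Icc_subset_Icc (by omega) (by omega)) hG
  rw [card_union_of_disjoint hYY] at this
  simp only [card_vadd_finset, Int.card_Icc] at this
  omega

end Counting

section Representation
variable {Y : Finset ℤ} {l : ℤ}

lemma two_mul_mem_sumsetSub_two_two (hY : Y ⊆ Icc 0 l) {t : ℤ}
    (hcard : #(Icc 0 (l + 2 * |t|)) < 3 * #Y) : 2 * t ∈ sumsetSub 2 2 Y := by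
  suffices key : ∀ t, 0 ≤ t → #(Icc 0 (l + 2 * t)) < 3 * #Y → 2 * t ∈ sumsetSub 2 2 Y by
    rcases le_total 0 t with ht | ht
    · exact key t ht (by rwa [abs_of_nonneg ht] at hcard)
    · simpa using neg_mem_sumsetSub (key (-t) (by omega) (by rwa [abs_of_nonpos ht] at hcard))
  intro t ht hcard
  obtain ⟨y, hy⟩ : Y.Nonempty := card_pos.1 (by omega)
  have h0 : (0 : ℤ) ∈ Y - Y := mem_sub.2 ⟨y, hy, y, hy, sub_self y⟩
  rcases mem_sub_or_two_mul_mem_sub hY ht hcard with h | h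
  · simpa [two_mul] using add_mem_sumsetSub (mem_sumsetSub_one_one_of_mem_sub h)
      (mem_sumsetSub_one_one_of_mem_sub h)
  · simpa using add_mem_sumsetSub (mem_sumsetSub_one_one_of_mem_sub h)
      (mem_sumsetSub_one_one_of_mem_sub h0)

lemma even_mem_sumsetSub_six_six (hY : Y ⊆ Icc 0 l) {c : ℤ}
    (hcard : #(Icc 0 (l + 2 * c)) < 3 * #Y) {e : ℤ} (he : Even e) (hec : |e| ≤ 6 * c) :
    e ∈ sumsetSub 6 6 Y := by
  obtain ⟨h, rfl⟩ := he
  have hmem : ∀ t, |t| ≤ c → 2 * t ∈ sumsetSub 2 2 Y := fun t ht =>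
    two_mul_mem_sumsetSub_two_two hY
      ((card_le_card (Icc_subset_Icc le_rfl (by omega))).trans_lt hcard)
  simp only [abs_eq_max_neg] at hec hmem
  have hsplit : h + h = 2 * (h / 3) + 2 * ((h + 1) / 3) + 2 * ((h + 2) / 3) := by omega
  rw [hsplit]
  exact add_mem_sumsetSub (add_mem_sumsetSub (hmem _ (by omega)) (hmem _ (by omega)))
    (hmem _ (by omega))

theorem Icc_subset_sumsetSub_nine_eight (hY : Y ⊆ Icc 0 l) (h0 : 0 ∈ Y) (hl : l ∈ Y)
    (hodd : ∃ d ∈ Y - Y, Odd d) (hcard : 5 ≤ #Y) (hdens : 2 * l + 3 ≤ 5 * #Y) :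
    (Icc 0 l : Set ℤ) ⊆ sumsetSub 9 8 Y := by
  intro p hp
  obtain ⟨x, hx, hxp⟩ := exists_mem_two_mul_abs_sub_add_card_le hY h0 hl hp
  obtain ⟨d, hd, hdodd, hdpos, hdsmall⟩ := exists_odd_mem_sub_eq_one_or_add_two_mul_card_le hY hodd
  set c := (3 * #Y - l - 2) / 2
  have hc : #(Icc 0 (l + 2 * c)) < 3 * #Y := by rw [Int.card_Icc]; omega
  obtain ⟨d₀, hd₀, e, hpe, he, hec⟩ : ∃ d₀ ∈ Y - Y, ∃ e, p = x + d₀ + e ∧ Even e ∧ |e| ≤ 6 * c := by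
    have hδ := hxp
    simp only [abs_eq_max_neg] at hδ ⊢
    rcases Int.even_or_odd (p - x) with hev | hodd'
    · exact ⟨0, mem_sub.2 ⟨x, hx, x, hx, sub_self x⟩, p - x, by ring, hev, by omega⟩
    have := Int.odd_iff.1 hodd'
    have := Int.odd_iff.1 hdodd
    rcases le_total 0 (p - x) with hs | hs
    · exact ⟨d, hd, p - x - d, by ring, hodd'.sub_odd hdodd, by omega⟩
    · exact ⟨-d, neg_mem_sub_self hd, p - x + d, by ring, hodd'.add_odd hdodd, by omega⟩
  have := add_mem_sumsetSub (add_mem_sumsetSub (add_mem_sumsetSub (mem_sumsetSub_one_zero hx)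
    (mem_sumsetSub_one_one_of_mem_sub hd₀)) (even_mem_sumsetSub_six_six hY hc he hec))
    (mem_sumsetSub_one_one_of_mem_sub (mem_sub.2 ⟨x, hx, x, hx, sub_self x⟩))
  simpa [hpe] using this

end Representation

section APIndices
variable {X : Finset ℤ} {u v : ℤ} {l : ℕ}

/-- `X` in the coordinates of the progression `{u + i * v : 0 ≤ i ≤ l}`. -/
noncomputable def apIndices (X : Finset ℤ) (u v : ℤ) (l : ℕ) : Finset ℤ :=
  (Icc 0 (l : ℤ)).filter fun i => u + i * v ∈ X

lemma apIndices_subset : apIndices X u v l ⊆ Icc 0 (l : ℤ) := filter_subset _ _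

lemma image_apIndices (hX : X ⊆ (range (l + 1)).image fun i : ℕ => u + (i : ℤ) * v) :
    (apIndices X u v l).image (fun i => u + i * v) = X := by
  ext x
  simp only [apIndices, mem_image, mem_filter, mem_Icc]
  constructor
  · rintro ⟨i, ⟨-, hi⟩, rfl⟩
    exact hi
  · intro hx
    obtain ⟨i, hi, rfl⟩ := mem_image.1 (hX hx)
    exact ⟨i, ⟨⟨by positivity, by simp only [mem_range] at hi; omega⟩, hx⟩, rfl⟩

lemma card_image_range_affine (hv : v ≠ 0) :
    #((range (l + 1)).image fun i : ℕ => u + (i : ℤ) * v) = l + 1 := by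
  rw [card_image_of_injective _ fun i j h => by
    exact_mod_cast mul_right_cancel₀ hv (add_left_cancel h), card_range]

lemma card_apIndices (hv : v ≠ 0)
    (hX : X ⊆ (range (l + 1)).image fun i : ℕ => u + (i : ℤ) * v) :
    #(apIndices X u v l) = #X :=
  (card_image_of_injective _ fun _ _ h => mul_right_cancel₀ hv (add_left_cancel h)).symm.trans
    (congrArg card (image_apIndices hX))

lemma le_of_forall_mem_apIndices (hv : v ≠ 0)
    (hX : X ⊆ (range (l + 1)).image fun i : ℕ => u + (i : ℤ) * v)
    (hmin : ∀ P' : Finset ℤ, IsAP P' → (X : Set ℤ) ⊆ P' → l + 1 ≤ #P')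
    {a k : ℤ} (hk : k ≠ 0) {L : ℕ} (h : ∀ i ∈ apIndices X u v l, ∃ j : ℕ, j ≤ L ∧ i = a + j * k) :
    l ≤ L := by
  have hcover : (X : Set ℤ) ⊆ ((range (L + 1)).image fun j : ℕ => (u + a * v) + j * (k * v)) := by
    intro x hx
    rw [mem_coe, ← image_apIndices hX] at hx
    obtain ⟨i, hi, rfl⟩ := mem_image.1 hx
    obtain ⟨j, hj, rfl⟩ := h i hi
    exact mem_image.2 ⟨j, mem_range.2 (by omega), by ring⟩
  have := (hmin _ ⟨_, _, L, mul_ne_zero hk hv, rfl⟩ hcover).trans card_image_le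
  simpa using this

lemma zero_mem_apIndices (hv : v ≠ 0)
    (hX : X ⊆ (range (l + 1)).image fun i : ℕ => u + (i : ℤ) * v)
    (hmin : ∀ P' : Finset ℤ, IsAP P' → (X : Set ℤ) ⊆ P' → l + 1 ≤ #P') (hl : 0 < l) :
    0 ∈ apIndices X u v l := by
  by_contra h0
  have := le_of_forall_mem_apIndices hv hX hmin (a := 1) one_ne_zero (L := l - 1) fun i hi => by
    have := mem_Icc.1 (apIndices_subset hi)
    have : i ≠ 0 := by rintro rfl; exact h0 hi
    exact ⟨(i - 1).toNat, by omega, by omega⟩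
  omega

lemma natCast_mem_apIndices (hv : v ≠ 0)
    (hX : X ⊆ (range (l + 1)).image fun i : ℕ => u + (i : ℤ) * v)
    (hmin : ∀ P' : Finset ℤ, IsAP P' → (X : Set ℤ) ⊆ P' → l + 1 ≤ #P') (hl : 0 < l) :
    (l : ℤ) ∈ apIndices X u v l := by
  by_contra hl'
  have := le_of_forall_mem_apIndices hv hX hmin (a := 0) one_ne_zero (L := l - 1) fun i hi => by
    have := mem_Icc.1 (apIndices_subset hi)
    have : i ≠ l := by rintro rfl; exact hl' hi
    exact ⟨i.toNat, by omega, by omega⟩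
  omega

lemma exists_odd_mem_apIndices (hv : v ≠ 0)
    (hX : X ⊆ (range (l + 1)).image fun i : ℕ => u + (i : ℤ) * v)
    (hmin : ∀ P' : Finset ℤ, IsAP P' → (X : Set ℤ) ⊆ P' → l + 1 ≤ #P') (hl : 0 < l) :
    ∃ i ∈ apIndices X u v l, Odd i := by
  by_contra! heven
  have := le_of_forall_mem_apIndices hv hX hmin (a := 0) two_ne_zero (L := l / 2) fun i hi => by
    have := mem_Icc.1 (apIndices_subset hi)
    have := Int.not_odd_iff.1 (heven i hi)
    exact ⟨(i / 2).toNat, by omega, by omega⟩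
  omega

end APIndices

theorem stmt0 (X P : Finset ℤ) (hX : 100 ≤ X.card) (hP : IsAP P)
    (hXP : (X : Set ℤ) ⊆ (P : Set ℤ))
    (hmin : ∀ P' : Finset ℤ, IsAP P' → (X : Set ℤ) ⊆ (P' : Set ℤ) → P.card ≤ P'.card)
    (hdens : (2 : ℝ) / 5 < (X.card : ℝ) / (P.card : ℝ)) :
    (P : Set ℤ) ⊆ sumsetSub 9 8 X := by
  obtain ⟨u, v, l, hv, rfl⟩ := hP
  have hXP : X ⊆ _ := coe_subset.1 hXP
  rw [card_image_range_affine hv] at hmin hdens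
  have hYcard := card_apIndices hv hXP
  have hl : 99 ≤ l := by
    have := card_le_card hXP
    rw [card_image_range_affine hv] at this
    omega
  have hdens' : 2 * (l : ℤ) + 3 ≤ 5 * #(apIndices X u v l) := by
    rw [div_lt_div_iff₀ (by norm_num) (by positivity)] at hdens
    have : 2 * (l + 1) < #X * 5 := by exact_mod_cast hdens
    omega
  have h0 := zero_mem_apIndices hv hXP hmin (by omega)
  obtain ⟨o, ho, hoodd⟩ := exists_odd_mem_apIndices hv hXP hmin (by omega)
  have hsub := Icc_subset_sumsetSub_nine_eight apIndices_subset h0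
    (natCast_mem_apIndices hv hXP hmin (by omega)) ⟨o, mem_sub.2 ⟨o, ho, 0, h0, sub_zero o⟩, hoodd⟩
    (by omega) hdens'
  intro p hp
  obtain ⟨i, hi, rfl⟩ := mem_image.1 hp
  have hi : (i : ℤ) ∈ Icc 0 (l : ℤ) := mem_Icc.2 ⟨i.cast_nonneg, by have := mem_range.1 hi; omega⟩
  have := affine_mem_sumsetSub_image (hsub hi) u v
  rw [image_apIndices hXP] at this
  simpa using this
end

section
/- Let $\alpha \in (0,1)$ be any real number, let $\sigma \in (0, 1/100)$, and let $N$ be sufficiently large in terms of $\sigma$. Then the set $\{n \in \mathbb{Z} : |n| \leq N, \; \|n\alpha\|_{\mathbb{T}} < \sigma\}$ contains a proper $d$-dimensional arithmetic progression $P$ with $d \leq 2$ and $|P| \gg \sigma N$. -/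
/-- `P` is a proper `d`-dimensional arithmetic progression in `ℤ`. -/
def IsProperProg (d : ℕ) (P : Finset ℤ) : Prop :=
  ∃ (a : ℤ) (v : Fin d → ℤ) (L : Fin d → ℕ),
    P = (Fintype.piFinset fun i => Finset.range (L i + 1)).image
      (fun l => a + ∑ i, (l i : ℤ) * v i) ∧
    P.card = ∏ i, (L i + 1)

/-- Distance from a real number to the nearest integer. -/
noncomputable def distT (x : ℝ) : ℝ := |x - round x|

/-!
Let `r` be the least positive integer with `‖rα‖ < σr/(8N)`; it exists by Dirichlet's theorem.
If `r = 1`, the whole interval `[-N, N]` works. Otherwise Dirichlet's theorem gives `0 < q < r`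
with `‖qα‖ ≤ 1/r`, while minimality of `r` gives `‖qα‖ ≥ σq/(8N)`. The progression
`{k₀q + k₁r : |k₀| ≤ σ/(16‖qα‖), |k₁| ≤ N/(4r)}` then lies in the Bohr set and has size
`≫ σN/(r‖qα‖) ≥ σN`. It is proper because a relation `k₀q = -k₁r` with `k₁ ≠ 0` would give
`|k₀|‖qα‖ = ‖k₀qα‖ ≤ |k₁|‖rα‖ < |k₁|σr/(8N) = |k₀|σq/(8N) ≤ |k₀|‖qα‖`.
-/

open Finset

lemma distT_nonneg (x : ℝ) : 0 ≤ distT x := abs_nonneg _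

lemma distT_le_abs_sub_intCast (x : ℝ) (m : ℤ) : distT x ≤ |x - m| := round_le x m

lemma distT_intCast_add (m : ℤ) (x : ℝ) : distT (m + x) = distT x := by
  simp only [distT, round_intCast_add, Int.cast_add]
  ring_nf

lemma distT_add_le (x y : ℝ) : distT (x + y) ≤ distT x + distT y :=
  (distT_le_abs_sub_intCast _ (round x + round y)).trans <| by
    rw [Int.cast_add, add_sub_add_comm]
    exact abs_add_le _ _

lemma distT_sum_le {ι : Type*} (s : Finset ι) (f : ι → ℝ) :
    distT (∑ i ∈ s, f i) ≤ ∑ i ∈ s, distT (f i) :=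
  le_sum_of_subadditive distT (by simp [distT]) distT_add_le s f

lemma distT_intCast_mul_le (k : ℤ) (x : ℝ) : distT (k * x) ≤ |(k : ℝ)| * distT x := by
  refine (distT_le_abs_sub_intCast _ (k * round x)).trans_eq ?_
  rw [distT, ← abs_mul, Int.cast_mul, mul_sub]

lemma distT_eq_abs_of_abs_le_half {x : ℝ} (hx : |x| ≤ 1 / 2) : distT x = |x| := by
  refine le_antisymm (by simpa using distT_le_abs_sub_intCast x 0) ?_
  rcases eq_or_ne (round x) 0 with h0 | h0
  · simp [distT, h0]
  · have h1 : (1 : ℝ) ≤ |(round x : ℝ)| := by exact_mod_cast Int.one_le_abs h0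
    have h2 := abs_sub_abs_le_abs_sub (round x : ℝ) x
    rw [distT, abs_sub_comm]
    linarith

lemma distT_intCast_mul_eq {k : ℤ} {x : ℝ} (h : |(k : ℝ)| * distT x ≤ 1 / 2) :
    distT (k * x) = |(k : ℝ)| * distT x := by
  have hsplit : (k : ℝ) * x = ((k * round x : ℤ) : ℝ) + k * (x - round x) := by push_cast; ring
  rw [hsplit, distT_intCast_add, distT_eq_abs_of_abs_le_half, abs_mul, distT]
  rwa [abs_mul]

lemma exists_distT_le_inv (α : ℝ) {Q : ℕ} (hQ : 0 < Q) :
    ∃ m : ℕ, 0 < m ∧ m ≤ Q ∧ distT (m * α) ≤ 1 / (Q + 1) :=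
  Real.exists_nat_abs_mul_sub_round_le α hQ

lemma exists_minimal_distT_lt_mul (α : ℝ) {θ : ℝ} (hθ : 0 < θ) :
    ∃ r : ℕ, 0 < r ∧ distT (r * α) < θ * r ∧
      ∀ m : ℕ, 0 < m → m < r → θ * m ≤ distT (m * α) := by
  classical
  have hex : ∃ m : ℕ, 0 < m ∧ distT (m * α) < θ * m := by
    obtain ⟨m, hm0, -, hm⟩ := exists_distT_le_inv α (Nat.ceil_pos.2 (one_div_pos.2 hθ))
    refine ⟨m, hm0, hm.trans_lt ?_⟩
    have hm1 : (1 : ℝ) ≤ m := by exact_mod_cast hm0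
    calc 1 / ((⌈1 / θ⌉₊ : ℝ) + 1) < 1 / (1 / θ) :=
          one_div_lt_one_div_of_lt (by positivity) (by linarith [Nat.le_ceil (1 / θ)])
      _ ≤ θ * m := by rw [one_div_one_div]; nlinarith
  exact ⟨Nat.find hex, (Nat.find_spec hex).1, (Nat.find_spec hex).2,
    fun m hm hmr => not_lt.1 fun h => Nat.find_min hex hmr ⟨hm, h⟩⟩

theorem exists_isProperProg_centered {d : ℕ} (v : Fin d → ℤ) (L : Fin d → ℕ)
    (hindep : ∀ k : Fin d → ℤ, (∀ i, |k i| ≤ 2 * L i) → ∑ i, k i * v i = 0 → k = 0) :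
    ∃ P : Finset ℤ, IsProperProg d P ∧
      (∀ n ∈ P, ∃ k : Fin d → ℤ, (∀ i, |k i| ≤ L i) ∧ n = ∑ i, k i * v i) ∧
      P.card = ∏ i, (2 * L i + 1) := by
  classical
  set box := Fintype.piFinset fun i => range (2 * L i + 1)
  set f : (Fin d → ℕ) → ℤ := fun l => -∑ i, (L i : ℤ) * v i + ∑ i, (l i : ℤ) * v i
  have hf : ∀ l, f l = ∑ i, ((l i : ℤ) - L i) * v i := by
    intro l
    simp only [f, sub_mul, sum_sub_distrib]
    ring
  have hbox : ∀ l ∈ box, ∀ i, l i ≤ 2 * L i := by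
    simp [box, Fintype.mem_piFinset]
  have hinj : Set.InjOn f box := by
    intro l hl l' hl' h
    have hbound : ∀ i, |(l i : ℤ) - l' i| ≤ 2 * L i := fun i => by
      have := hbox l hl i
      have := hbox l' hl' i
      exact abs_le.2 ⟨by omega, by omega⟩
    have hzero := hindep (fun i => (l i : ℤ) - l' i) hbound
      (by simp only [f] at h; simp only [sub_mul, sum_sub_distrib]; linarith)
    funext i
    have := congrFun hzero i
    simp only [Pi.zero_apply, sub_eq_zero] at this
    exact_mod_cast this
  have hcard : (box.image f).card = ∏ i, (2 * L i + 1) := by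
    rw [card_image_of_injOn hinj, Fintype.card_piFinset]
    simp
  refine ⟨box.image f, ⟨_, v, fun i => 2 * L i, rfl, hcard⟩, ?_, hcard⟩
  intro n hn
  obtain ⟨l, hl, rfl⟩ := mem_image.1 hn
  refine ⟨fun i => l i - L i, fun i => ?_, hf l⟩
  have := hbox l hl i
  dsimp only
  exact abs_le.2 ⟨by omega, by omega⟩

theorem exists_isProperProg_of_sum_le {d : ℕ} {α σ : ℝ} {N : ℕ} (v : Fin d → ℤ) (L : Fin d → ℕ)
    (hindep : ∀ k : Fin d → ℤ, (∀ i, |k i| ≤ 2 * L i) → ∑ i, k i * v i = 0 → k = 0)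
    (hsize : ∑ i, (L i : ℤ) * |v i| ≤ N) (hdist : ∑ i, (L i : ℝ) * distT (v i * α) < σ) :
    ∃ P : Finset ℤ, IsProperProg d P ∧ (∀ n ∈ P, |n| ≤ N ∧ distT (n * α) < σ) ∧
      P.card = ∏ i, (2 * L i + 1) := by
  obtain ⟨P, hP, hmem, hcard⟩ := exists_isProperProg_centered v L hindep
  refine ⟨P, hP, fun n hn => ?_, hcard⟩
  obtain ⟨k, hk, rfl⟩ := hmem n hn
  constructor
  · calc |∑ i, k i * v i| ≤ ∑ i, |k i * v i| := abs_sum_le_sum_abs _ _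
      _ ≤ ∑ i, (L i : ℤ) * |v i| := sum_le_sum fun i _ => by
          rw [abs_mul]
          exact mul_le_mul_of_nonneg_right (hk i) (abs_nonneg _)
      _ ≤ N := hsize
  · calc distT ((∑ i, k i * v i : ℤ) * α) ≤ ∑ i, distT (k i * (v i * α)) := by
          push_cast
          simpa only [sum_mul, mul_assoc] using distT_sum_le univ _
      _ ≤ ∑ i, (L i : ℝ) * distT (v i * α) := sum_le_sum fun i _ =>
          (distT_intCast_mul_le _ _).trans <|
            mul_le_mul_of_nonneg_right (by exact_mod_cast hk i) (distT_nonneg _)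
      _ < σ := hdist

theorem exists_isProperProg_interval {α σ : ℝ} {N : ℕ} (hα : N * distT α < σ) :
    ∃ P : Finset ℤ, IsProperProg 1 P ∧ (∀ n ∈ P, |n| ≤ N ∧ distT (n * α) < σ) ∧
      P.card = 2 * N + 1 := by
  have hindep : ∀ k : Fin 1 → ℤ, (∀ i, |k i| ≤ 2 * (![N] i : ℤ)) → ∑ i, k i * ![1] i = 0 →
      k = 0 := by
    intro k _ hk
    funext i
    simpa [Subsingleton.elim i 0] using hk
  simpa using exists_isProperProg_of_sum_le (N := N) ![1] ![N] hindep (by simp) (by simpa using hα)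

lemma eq_zero_of_mul_add_mul_eq_zero {α θ : ℝ} {q r : ℕ} (hq : 0 < q)
    (hqα : θ * q ≤ distT (q * α)) (hrα : distT (r * α) < θ * r) {k₀ k₁ : ℤ}
    (hk₀ : |(k₀ : ℝ)| * distT (q * α) ≤ 1 / 2) (h : k₀ * q + k₁ * r = 0) :
    k₀ = 0 ∧ k₁ = 0 := by
  have hr : 0 < r := Nat.pos_of_ne_zero <| by rintro rfl; simp [distT] at hrα
  by_cases hk₁ : k₁ = 0
  · subst hk₁
    simp only [zero_mul, add_zero, mul_eq_zero] at h
    exact ⟨h.resolve_right (by omega), rfl⟩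
  · have hk₁' : (0 : ℝ) < |(k₁ : ℝ)| := by simpa using hk₁
    have hrel : (k₀ : ℝ) * q = -(k₁ * r) := by exact_mod_cast eq_neg_of_add_eq_zero_left h
    have habs : |(k₀ : ℝ)| * q = |(k₁ : ℝ)| * r := by simpa [abs_mul] using congrArg abs hrel
    have hcast : (k₀ : ℝ) * (q * α) = ((-k₁ : ℤ) : ℝ) * (r * α) := by
      push_cast
      linear_combination α * hrel
    have hle := distT_intCast_mul_le (-k₁) (r * α)
    rw [← hcast, distT_intCast_mul_eq hk₀, Int.cast_neg, abs_neg] at hle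
    refine absurd ?_ (lt_irrefl (|(k₀ : ℝ)| * distT (q * α)))
    calc |(k₀ : ℝ)| * distT (q * α) ≤ |(k₁ : ℝ)| * distT (r * α) := hle
      _ < |(k₁ : ℝ)| * (θ * r) := mul_lt_mul_of_pos_left hrα hk₁'
      _ = |(k₀ : ℝ)| * (θ * q) := by rw [mul_left_comm, ← habs]; ring
      _ ≤ |(k₀ : ℝ)| * distT (q * α) := mul_le_mul_of_nonneg_left hqα (abs_nonneg _)

theorem exists_isProperProg_two {α σ : ℝ} {N q r : ℕ} (hσ0 : 0 < σ) (hσ : σ ≤ 4) (hN : 0 < N)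
    (hq : 0 < q) (hqα : σ / (8 * N) * q ≤ distT (q * α))
    (hrα : distT (r * α) < σ / (8 * N) * r) (hqr : r * distT (q * α) ≤ 1) :
    ∃ P : Finset ℤ, IsProperProg 2 P ∧ (∀ n ∈ P, |n| ≤ N ∧ distT (n * α) < σ) ∧
      σ * N / 64 ≤ P.card := by
  set δ := distT (q * α)
  have hN' : (0 : ℝ) < N := by exact_mod_cast hN
  have hq' : (0 : ℝ) < q := by exact_mod_cast hq
  have hδ : 0 < δ := lt_of_lt_of_le (by positivity) hqα
  have hr : 0 < r := Nat.pos_of_ne_zero <| by rintro rfl; simp [distT] at hrα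
  have hr' : (0 : ℝ) < r := by exact_mod_cast hr
  set L₁ := ⌊σ / (16 * δ)⌋₊
  set L₂ := N / (4 * r)
  have hL₁ : L₁ * δ ≤ σ / 16 := by
    have := Nat.floor_le (by positivity : 0 ≤ σ / (16 * δ))
    rw [le_div_iff₀ (by positivity)] at this
    linarith
  have hL₁' : σ < (L₁ + 1) * (16 * δ) := by
    have := Nat.lt_floor_add_one (σ / (16 * δ))
    rwa [div_lt_iff₀ (by positivity)] at this
  have hL₂ : (L₂ : ℝ) * (4 * r) ≤ N := by exact_mod_cast Nat.div_mul_le_self N (4 * r)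
  have hL₂' : (N : ℝ) < (L₂ + 1) * (4 * r) := by
    have := Nat.lt_div_mul_add (a := N) (by omega : 0 < 4 * r)
    rw [add_one_mul]
    exact_mod_cast this
  have hqα' : σ * q ≤ 8 * N * δ := by
    rw [div_mul_eq_mul_div, div_le_iff₀ (by positivity)] at hqα
    linarith
  have hindep : ∀ k : Fin 2 → ℤ, (∀ i, |k i| ≤ 2 * (![L₁, L₂] i : ℤ)) →
      ∑ i, k i * ![(q : ℤ), r] i = 0 → k = 0 := by
    intro k hk hsum
    have hk₀ : |(k 0 : ℝ)| * δ ≤ 1 / 2 := by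
      have : |(k 0 : ℝ)| ≤ 2 * L₁ := by exact_mod_cast hk 0
      nlinarith
    simp only [Fin.sum_univ_two, Matrix.cons_val_zero, Matrix.cons_val_one] at hsum
    obtain ⟨h0, h1⟩ := eq_zero_of_mul_add_mul_eq_zero hq hqα hrα hk₀ hsum
    funext i
    fin_cases i <;> assumption
  have hsize : (L₁ : ℝ) * q + L₂ * r ≤ N := by
    have : (L₁ : ℝ) * q * δ ≤ N / 2 * δ := by nlinarith
    nlinarith [le_of_mul_le_mul_right this hδ]
  have hdist : (L₁ : ℝ) * δ + L₂ * distT (r * α) < σ := by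
    have : (L₂ : ℝ) * distT (r * α) ≤ σ / (8 * N) * (L₂ * r) := by
      nlinarith [distT_nonneg (r * α)]
    have : σ / (8 * N) * (L₂ * r) ≤ σ / 32 := by
      rw [div_mul_eq_mul_div, div_le_iff₀ (by positivity)]
      nlinarith
    linarith
  obtain ⟨P, hP, hmem, hcard⟩ := exists_isProperProg_of_sum_le (α := α) (σ := σ) (N := N)
    ![(q : ℤ), r] ![L₁, L₂] hindep
    (by simpa [Fin.sum_univ_two] using (by exact_mod_cast hsize : (L₁ : ℤ) * q + L₂ * r ≤ N))
    (by simpa [Fin.sum_univ_two] using hdist)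
  refine ⟨P, hP, hmem, ?_⟩
  rw [hcard]
  simp only [Fin.prod_univ_two, Matrix.cons_val_zero, Matrix.cons_val_one]
  push_cast
  have hprod : σ * N < (L₁ + 1) * (L₂ + 1) * (r * δ) * 64 := by
    nlinarith [mul_lt_mul'' hL₁' hL₂' hσ0.le hN'.le]
  have hAB : (0 : ℝ) ≤ (L₁ + 1) * (L₂ + 1) := by positivity
  nlinarith [mul_le_mul_of_nonneg_left hqr hAB]

theorem stmt5 :
    ∃ c : ℝ, 0 < c ∧ ∀ σ : ℝ, 0 < σ → σ < 1 / 100 → ∃ N₀ : ℕ, ∀ N : ℕ, N₀ ≤ N →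
      ∀ α : ℝ, 0 < α → α < 1 →
        ∃ d : ℕ, d ≤ 2 ∧ ∃ P : Finset ℤ, IsProperProg d P ∧
          (∀ n ∈ P, |n| ≤ (N : ℤ) ∧ distT ((n : ℝ) * α) < σ) ∧
          c * σ * (N : ℝ) ≤ (P.card : ℝ) := by
  refine ⟨1 / 64, by norm_num, fun σ hσ0 hσ1 => ⟨1, fun N hN α _ _ => ?_⟩⟩
  have hN' : (0 : ℝ) < N := by exact_mod_cast hN
  obtain ⟨r, hr0, hrα, hrmin⟩ :=
    exists_minimal_distT_lt_mul α (by positivity : 0 < σ / (8 * N))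
  obtain rfl | hr1 := (Nat.succ_le_of_lt hr0).eq_or_lt
  · have hα : N * distT α < σ := by
      rw [Nat.cast_one, one_mul, mul_one, lt_div_iff₀ (by positivity)] at hrα
      linarith
    obtain ⟨P, hP, hmem, hcard⟩ := exists_isProperProg_interval hα
    refine ⟨1, by norm_num, P, hP, hmem, ?_⟩
    rw [hcard]
    push_cast
    nlinarith
  · obtain ⟨q, hq0, hqr, hqα⟩ := exists_distT_le_inv α (by omega : 0 < r - 1)
    have hqα' : r * distT (q * α) ≤ 1 := by
      rw [Nat.cast_sub hr1.le, Nat.cast_one, sub_add_cancel] at hqα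
      rwa [le_div_iff₀' (by positivity)] at hqα
    obtain ⟨P, hP, hmem, hcard⟩ := exists_isProperProg_two hσ0 (by linarith) hN hq0
      (hrmin q hq0 (by omega)) hrα hqα'
    exact ⟨2, le_rfl, P, hP, hmem, by linarith⟩
end

section
/- Let $\vec{a} = (a_1, \dots, a_d) \in \mathbb{Z}^d$ be nonzero with $\gcd(a_1, \dots, a_d) = 1$, and let $H = \{\vec{x} \in \mathbb{R}^d : \vec{a} \cdot \vec{x} = 0\}$. Then the $(d-1)$-dimensional volume of a fundamental domain of the lattice $\Lambda = \mathbb{Z}^d \cap H$ (inside the hyperplane $H$) equals $\|\vec{a}\|_2$. -/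
/-! Let `v ∈ ℤᵈ` be a Bézout vector, `a ⬝ v = 1`. Every `y ∈ ℤᵈ` splits as
`(y - (a ⬝ y) v) + (a ⬝ y) v` with the first summand in `Λ`, so the basis `b` of `Λ` completed
by the row `v` is a unimodular matrix `V`. Replacing that last row by `a` gives a matrix `B`;
writing `a = c V`, the coefficient `c_last` equals `a ⬝ a` because `a ⊥ bᵢ` and `a ⬝ v = 1`,
so `det B = ‖a‖² det V`. Finally `B Vᵀ` is block triangular with diagonal blocks `Gram(b)`
and `a ⬝ v = 1`, whence `det Gram(b) = det B · det V = ‖a‖² (det V)² = ‖a‖²`. -/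

open Matrix

namespace Matrix

variable {R : Type*} [CommRing R] {n : ℕ}

theorem det_eq_mul_det_submatrix_castSucc_of_last_row (M : Matrix (Fin (n + 1)) (Fin (n + 1)) R)
    (h : ∀ j : Fin n, M (Fin.last n) j.castSucc = 0) :
    M.det = M (Fin.last n) (Fin.last n) * (M.submatrix Fin.castSucc Fin.castSucc).det := by
  rw [det_succ_row M (Fin.last n), Fin.sum_univ_castSucc]
  simp [h, Fin.succAbove_last, ← two_mul, pow_mul]

theorem isUnit_of_fin_snoc_of_dotProduct_eq_one (r : Fin n → Fin (n + 1) → R)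
    {a v : Fin (n + 1) → R} (hav : a ⬝ᵥ v = 1)
    (hr : ∀ y, a ⬝ᵥ y = 0 → y ∈ Submodule.span R (Set.range r)) :
    IsUnit (of (Fin.snoc r v)) := by
  rw [← vecMul_surjective_iff_isUnit]
  intro y
  have hy : a ⬝ᵥ (y - (a ⬝ᵥ y) • v) = 0 := by
    simp [dotProduct_sub, dotProduct_smul, hav]
  obtain ⟨c, hc⟩ := (Submodule.mem_span_range_iff_exists_fun R).1 (hr _ hy)
  refine ⟨Fin.snoc c (a ⬝ᵥ y), show _ ᵥ* _ = y from ?_⟩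
  have hrow (i) : of (Fin.snoc r v) i = (Fin.snoc r v : Fin (n + 1) → Fin (n + 1) → R) i := rfl
  simp [vecMul_eq_sum, Fin.sum_univ_castSucc, hrow, hc]

theorem det_gram_eq_dotProduct_self_mul_det_sq (b : Fin n → Fin (n + 1) → R)
    {a v : Fin (n + 1) → R} (hab : ∀ i, a ⬝ᵥ b i = 0) (hav : a ⬝ᵥ v = 1)
    (hV : IsUnit (of (Fin.snoc b v))) :
    (of fun i j => b i ⬝ᵥ b j).det =
      (a ⬝ᵥ a) * (of (Fin.snoc b v)).det ^ 2 := by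
  set V := of (Fin.snoc b v)
  set B := of (Fin.snoc b a)
  have hBV_apply : ∀ i j, (B * Vᵀ) i j =
      (Fin.snoc b a : Fin (n + 1) → Fin (n + 1) → R) i ⬝ᵥ
        (Fin.snoc b v : Fin (n + 1) → Fin (n + 1) → R) j :=
    fun _ _ => rfl
  have hBV : (B * Vᵀ).det = (of fun i j => b i ⬝ᵥ b j).det := by
    rw [det_eq_mul_det_submatrix_castSucc_of_last_row _ (by simp [hBV_apply, hab])]
    simp [hBV_apply, hav, submatrix]
  obtain ⟨c, hc : c ᵥ* V = a⟩ := vecMul_surjective_iff_isUnit.2 hV a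
  have hVa : V *ᵥ a = Pi.single (Fin.last n) 1 := by
    ext i
    induction i using Fin.lastCases <;> simp [V, mulVec, dotProduct_comm, hab, hav]
  have hc_last : c (Fin.last n) = a ⬝ᵥ a :=
    calc c (Fin.last n) = c ⬝ᵥ V *ᵥ a := by simp [hVa]
      _ = a ⬝ᵥ a := by rw [dotProduct_mulVec, hc]
  have hB : B = V.updateRow (Fin.last n) (∑ k, c k • V k) := by
    rw [← vecMul_eq_sum, hc]
    ext i j
    induction i using Fin.lastCases <;> simp [B, V]
  rw [← hBV, det_mul, det_transpose, hB, det_updateRow_sum, hc_last, smul_eq_mul]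
  ring

end Matrix

theorem stmt6_general (d : ℕ) (hd : 1 ≤ d) (a : Fin d → ℤ)
    (hgcd : Finset.univ.gcd a = 1)
    (b : Fin (d - 1) → (Fin d → ℝ))
    (hb : ∀ x : Fin d → ℝ,
      x ∈ Submodule.span ℤ (Set.range b) ↔
        ((∀ k, ∃ m : ℤ, x k = (m : ℝ)) ∧ ∑ k, (a k : ℝ) * x k = 0)) :
    Real.sqrt (Matrix.det (Matrix.of fun i j : Fin (d - 1) => ∑ k, b i k * b j k)) =
      Real.sqrt (∑ k, (a k : ℝ) ^ 2) := by
  obtain ⟨n, rfl⟩ : ∃ n, d = n + 1 := ⟨d - 1, by omega⟩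
  have hb_mem (i : Fin n) := (hb (b i)).1 (Submodule.subset_span ⟨i, rfl⟩)
  choose bz hbz using fun i => (hb_mem i).1
  obtain ⟨v, hv⟩ := Finset.univ.gcd_eq_sum_mul a
  rw [hgcd] at hv
  set toReal : (Fin (n + 1) → ℤ) →ₗ[ℤ] Fin (n + 1) → ℝ :=
    (Int.castAddHom ℝ).toIntLinearMap.compLeft _
  have toReal_apply (y k) : toReal y k = y k := rfl
  have hb_cast : b = toReal ∘ bz := by
    ext i k
    simp [toReal_apply, hbz]
  have hunit : IsUnit (of (Fin.snoc bz v)) := by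
    refine isUnit_of_fin_snoc_of_dotProduct_eq_one bz hv.symm fun y hy => ?_
    have h_inj : Function.Injective toReal :=
      fun _ _ h => funext fun k => Int.cast_injective (congrFun h k)
    rw [← Submodule.apply_mem_span_image_iff_mem_span h_inj, ← Set.range_comp, ← hb_cast, hb]
    exact ⟨fun k => ⟨y k, rfl⟩, by simp only [toReal_apply]; exact_mod_cast hy⟩
  have hV : of (Fin.snoc b (toReal v)) =
      (Int.castRingHom ℝ).mapMatrix (of (Fin.snoc bz v)) := by
    ext i k
    induction i using Fin.lastCases <;> simp [toReal_apply, hbz]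
  have hgram := det_gram_eq_dotProduct_self_mul_det_sq b (a := toReal a) (v := toReal v)
    (fun i => by simpa [toReal_apply, dotProduct] using (hb_mem i).2)
    (by simp only [dotProduct, toReal_apply]; exact_mod_cast hv.symm) (hV ▸ hunit.map _)
  rw [hV, ← RingHom.map_det, ← map_pow,
    Int.isUnit_sq ((isUnit_iff_isUnit_det _).1 hunit)] at hgram
  congr 1
  simpa [toReal_apply, dotProduct, sq] using hgram

/-- If `b` is a ℤ-basis of the lattice `ℤᵈ ∩ H`, where `H = {x : a ⬝ x = 0}` and
`gcd(a₁,…,a_d) = 1`, then the `(d-1)`-dimensional volume of the fundamental domain,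
i.e. the square root of the Gram determinant of `b`, equals `‖a‖₂`. -/
theorem stmt6 (d : ℕ) (hd : 1 ≤ d) (a : Fin d → ℤ) (ha : a ≠ 0)
    (hgcd : Finset.univ.gcd a = 1)
    (b : Fin (d - 1) → (Fin d → ℝ))
    (hb : ∀ x : Fin d → ℝ,
      x ∈ Submodule.span ℤ (Set.range b) ↔
        ((∀ k, ∃ m : ℤ, x k = (m : ℝ)) ∧ ∑ k, (a k : ℝ) * x k = 0)) :
    Real.sqrt (Matrix.det (Matrix.of fun i j : Fin (d - 1) => ∑ k, b i k * b j k)) =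
      Real.sqrt (∑ k, (a k : ℝ) ^ 2) :=
  stmt6_general d hd a hgcd b hb
end

section
/- Let $p$ be a prime with $200N \leq p < 400N$, let $\beta \in \mathbb{R}$, and let $P = \{a + qn : 1 \leq n \leq N'\} \subseteq [N]$ be an arithmetic progression, viewed as a subset of $\mathbb{Z}/p\mathbb{Z}$. Define $f_1 : \mathbb{Z}/p\mathbb{Z} \to \mathbb{C}$ by $f_1(x) = e(\beta x) 1_P(x)$, and let $\hat{f_1}(r) = p^{-1}\sum_{x \in \mathbb{Z}/p\mathbb{Z}} f_1(x) e(-xr/p)$. Then $\sum_{r \in \mathbb{Z}/p\mathbb{Z}} |\hat{f_1}(r)|^{4/3} \leq C$ for some absolute constant $C$, independent of $N$, $p$, $\beta$, and $P$. -/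
/-!
With `γ = β - r/p`, the coefficient is `p⁻¹ e(aγ) ∑_{n ≤ N'} e(nqγ)`, and summing the geometric
series gives `|f̂₁(r)| ≤ p⁻¹ min(N', 1/(2‖qγ‖))`. If `⌊qβp⌋ - qr ≡ u (mod p)` with `0 ≤ u < p`, then
`pqγ` lies in `[u, u + 1) + pℤ`, so `p‖qγ‖ ≥ v := min(u, p - 1 - u)`; as `N' < p` this yields
`|f̂₁(r)| ≤ 1/(v + 1)`. Since `q` is invertible modulo the prime `p`, the map `r ↦ ⌊qβp⌋ - qr`
permutes `ℤ/pℤ`, each value of `v` occurs at most twice, and the sum of `|f̂₁(r)|^{4/3}` is at most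
`2 ∑_{n ≥ 0} (n + 1)^{-4/3}`. When `q = 0` or `N' = 0` the progression has at most one element
and the sum is at most `1`.
-/

open Complex

/-- `e(θ) = e^{2πiθ}`. -/
noncomputable def eR (θ : ℝ) : ℂ := Complex.exp (2 * Real.pi * Complex.I * θ)

open Finset

lemma eR_add (s t : ℝ) : eR (s + t) = eR s * eR t := by
  simp only [eR, ofReal_add, mul_add, exp_add]

lemma eR_intCast (k : ℤ) : eR k = 1 := by
  rw [eR, exp_eq_one_iff]
  exact ⟨k, by push_cast; ring⟩

lemma norm_eR (θ : ℝ) : ‖eR θ‖ = 1 := by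
  rw [eR, show 2 * (Real.pi : ℂ) * I * θ = ((2 * Real.pi * θ : ℝ) : ℂ) * I by push_cast; ring]
  exact norm_exp_ofReal_mul_I _

lemma eR_pow (θ : ℝ) (n : ℕ) : eR θ ^ n = eR (n * θ) := by
  rw [eR, eR, ← exp_nat_mul]
  push_cast
  ring_nf

lemma norm_eR_sub_one (θ : ℝ) : ‖eR θ - 1‖ = 2 * |Real.sin (Real.pi * θ)| := by
  rw [eR, show 2 * (Real.pi : ℂ) * I * θ = I * ((2 * Real.pi * θ : ℝ) : ℂ) by push_cast; ring,
    norm_exp_I_mul_ofReal_sub_one, norm_mul, Real.norm_eq_abs]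
  ring_nf
  norm_num

lemma four_mul_abs_sub_round_le_norm_eR_sub_one (θ : ℝ) : 4 * |θ - round θ| ≤ ‖eR θ - 1‖ := by
  set t := θ - round θ
  have hper : eR θ = eR t := by
    rw [show θ = t + round θ by ring, eR_add, eR_intCast, mul_one]
  have hπ := Real.pi_pos
  have hjordan := Real.mul_abs_le_abs_sin (x := Real.pi * t)
    (by rw [abs_mul, abs_of_pos hπ]; nlinarith [abs_sub_round θ])
  rw [abs_mul, abs_of_pos hπ, ← mul_assoc, div_mul_cancel₀ _ hπ.ne'] at hjordan
  rw [hper, norm_eR_sub_one]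
  linarith

lemma norm_sum_Icc_pow_mul_norm_sub_one_le {z : ℂ} (hz : ‖z‖ = 1) (M : ℕ) :
    ‖∑ n ∈ Icc 1 M, z ^ n‖ * ‖z - 1‖ ≤ 2 := by
  have htel : (∑ n ∈ Icc 1 M, z ^ n) * (z - 1) = z ^ (M + 1) - z := by
    induction M with
    | zero => simp
    | succ M ih => rw [sum_Icc_succ_top (by omega), add_mul, ih]; ring
  rw [← norm_mul, htel]
  calc _ ≤ ‖z ^ (M + 1)‖ + ‖z‖ := norm_sub_le _ _
    _ = 2 := by rw [norm_pow, hz]; norm_num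

lemma norm_sum_Icc_eR_mul_abs_sub_round_le (α : ℝ) (M : ℕ) :
    ‖∑ n ∈ Icc 1 M, eR (n * α)‖ * (2 * |α - round α|) ≤ 1 := by
  have h := norm_sum_Icc_pow_mul_norm_sub_one_le (norm_eR α) M
  simp only [eR_pow] at h
  nlinarith [four_mul_abs_sub_round_le_norm_eR_sub_one α, norm_nonneg (∑ n ∈ Icc 1 M, eR (n * α))]

lemma norm_sum_Icc_eR_le_card (α : ℝ) (M : ℕ) : ‖∑ n ∈ Icc 1 M, eR (n * α)‖ ≤ M := by
  simpa using norm_sum_le_of_le (Icc 1 M) fun n _ => (norm_eR (n * α)).le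

/-- For `u = s.val`, the distance from the interval `[u, u + 1)` to the nearest multiple of `p`. -/
def cellDist {p : ℕ} (s : ZMod p) : ℕ := min s.val (p - 1 - s.val)

lemma cellDist_le_abs_sub_mul {p : ℕ} [NeZero p] (y : ℝ) (j : ℤ) :
    (cellDist (⌊y⌋ : ZMod p) : ℝ) ≤ |y - p * j| := by
  set u := ((⌊y⌋ : ℤ) : ZMod p).val
  have hup : u < p := ZMod.val_lt _
  have hfloor : (⌊y⌋ : ℝ) = u + p * (⌊y⌋ / p : ℤ) := by
    have : (u : ℤ) = ⌊y⌋ % p := ZMod.val_intCast _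
    exact_mod_cast (by rw [this]; exact (Int.emod_add_mul_ediv _ _).symm)
  have hy₀ := Int.floor_le y
  have hy₁ := Int.lt_floor_add_one y
  have hp : (0 : ℝ) ≤ p := p.cast_nonneg
  rcases le_or_gt j (⌊y⌋ / p) with h | h
  · have hj : (j : ℝ) ≤ (⌊y⌋ / p : ℤ) := by exact_mod_cast h
    calc (cellDist (⌊y⌋ : ZMod p) : ℝ) ≤ u := by exact_mod_cast min_le_left _ _
      _ ≤ y - p * j := by nlinarith
      _ ≤ |y - p * j| := le_abs_self _
  · have hj : ((⌊y⌋ / p : ℤ) : ℝ) + 1 ≤ j := by exact_mod_cast h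
    calc (cellDist (⌊y⌋ : ZMod p) : ℝ) ≤ ((p - 1 - u : ℕ) : ℝ) := by
          exact_mod_cast min_le_right _ _
      _ = p - 1 - u := by rw [Nat.sub_sub, Nat.cast_sub (by omega)]; push_cast; ring
      _ ≤ -(y - p * j) := by nlinarith
      _ ≤ |y - p * j| := neg_le_abs _

lemma norm_sum_Icc_eR_le_div_cellDist {p : ℕ} [NeZero p] (α : ℝ) {M : ℕ} (hM : M ≤ p) :
    ‖∑ n ∈ Icc 1 M, eR (n * α)‖ ≤ p / (cellDist (⌊p * α⌋ : ZMod p) + 1 : ℝ) := by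
  set v := cellDist (⌊p * α⌋ : ZMod p)
  have hp : (0 : ℝ) < p := by exact_mod_cast Nat.pos_of_neZero p
  have hM' : (M : ℝ) ≤ p := by exact_mod_cast hM
  rw [le_div_iff₀ (by positivity)]
  rcases Nat.eq_zero_or_pos v with hv | hv
  · rw [hv, Nat.cast_zero, zero_add, mul_one]
    exact (norm_sum_Icc_eR_le_card α M).trans hM'
  · have hdist : (v : ℝ) ≤ p * |α - round α| := by
      have := cellDist_le_abs_sub_mul (p := p) (p * α) (round α)
      rwa [← mul_sub, abs_mul, abs_of_pos hp] at this
    have hv1 : (1 : ℝ) ≤ v := by exact_mod_cast hv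
    nlinarith [norm_sum_Icc_eR_mul_abs_sub_round_le α M, norm_nonneg (∑ n ∈ Icc 1 M, eR (n * α))]

lemma ZMod.sum_val_eq_sum_range {M : Type*} [AddCommMonoid M] (p : ℕ) [NeZero p] (F : ℕ → M) :
    ∑ x : ZMod p, F x.val = ∑ m ∈ range p, F m := by
  refine sum_nbij' ZMod.val (fun m => (m : ZMod p)) (fun x _ => mem_range.mpr (ZMod.val_lt x))
    (fun _ _ => mem_univ _) (fun x _ => ZMod.natCast_zmod_val x)
    (fun m hm => ZMod.val_cast_of_lt (mem_range.mp hm)) (fun _ _ => rfl)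

lemma sum_indicator_mul_eR_eq {p : ℕ} [NeZero p] {P : Finset ℕ} (hP : ∀ m ∈ P, m < p)
    (β t : ℝ) :
    ∑ x : ZMod p, (if x.val ∈ P then eR (β * x.val) else 0) * eR (-(x.val * t) / p)
      = ∑ m ∈ P, eR (m * (β - t / p)) := by
  have hterm : ∀ m : ℕ, (if m ∈ P then eR (β * m) else 0) * eR (-(m * t) / p)
      = if m ∈ P then eR (m * (β - t / p)) else 0 := by
    intro m
    split_ifs
    · rw [← eR_add]; ring_nf
    · rw [zero_mul]
  simp only [hterm]
  rw [ZMod.sum_val_eq_sum_range p (fun m => if m ∈ P then eR (m * (β - t / p)) else 0),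
    sum_ite_mem, inter_eq_right.mpr fun m hm => mem_range.mpr (hP m hm)]

lemma sum_image_eR_eq {a q : ℕ} (hq : q ≠ 0) (N' : ℕ) (γ : ℝ) :
    ∑ m ∈ (Icc 1 N').image (fun n => a + q * n), eR (m * γ)
      = eR (a * γ) * ∑ n ∈ Icc 1 N', eR (n * (q * γ)) := by
  rw [sum_image fun x _ y _ h => Nat.eq_of_mul_eq_mul_left (Nat.pos_of_ne_zero hq) (by omega),
    mul_sum]
  refine sum_congr rfl fun n _ => ?_
  rw [← eR_add]
  push_cast
  ring_nf

lemma norm_inv_mul_sum_image_eR_le {p : ℕ} [NeZero p] {a q N' : ℕ} (hq : q ≠ 0) (hN' : N' ≤ p)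
    (β : ℝ) (r : ZMod p) :
    ‖(p : ℂ)⁻¹ * ∑ m ∈ (Icc 1 N').image (fun n => a + q * n), eR (m * (β - r.val / p))‖
      ≤ (cellDist ((⌊q * β * p⌋ : ZMod p) - (q : ZMod p) * r) + 1 : ℝ)⁻¹ := by
  have hp : (p : ℝ) ≠ 0 := NeZero.ne _
  have hfloor : ((⌊p * (q * (β - r.val / p))⌋ : ℤ) : ZMod p)
      = (⌊q * β * p⌋ : ZMod p) - (q : ZMod p) * r := by
    rw [show (p : ℝ) * (q * (β - r.val / p)) = q * β * p - ((q * r.val : ℕ) : ℝ) by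
      push_cast; field_simp, Int.floor_sub_natCast]
    push_cast
    rw [ZMod.natCast_zmod_val]
  rw [sum_image_eR_eq hq, norm_mul, norm_mul, norm_eR, one_mul, norm_inv, Complex.norm_natCast]
  calc (p : ℝ)⁻¹ * ‖∑ n ∈ Icc 1 N', eR (n * (q * (β - r.val / p)))‖
      ≤ (p : ℝ)⁻¹ * (p / (cellDist ((⌊q * β * p⌋ : ZMod p) - (q : ZMod p) * r) + 1 : ℝ)) := by
        gcongr
        rw [← hfloor]
        exact norm_sum_Icc_eR_le_div_cellDist _ hN'
    _ = _ := by field_simp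

lemma sum_cellDist_le {p : ℕ} [NeZero p] {g : ℕ → ℝ} (hg : ∀ n, 0 ≤ g n) :
    ∑ s : ZMod p, g (cellDist s) ≤ 2 * ∑ n ∈ range p, g n := by
  calc ∑ s : ZMod p, g (cellDist s) = ∑ u ∈ range p, g (min u (p - 1 - u)) :=
        ZMod.sum_val_eq_sum_range p fun u => g (min u (p - 1 - u))
    _ ≤ ∑ u ∈ range p, (g u + g (p - 1 - u)) := by
        refine sum_le_sum fun u _ => ?_
        rcases min_choice u (p - 1 - u) with h | h <;> rw [h]
        · exact le_add_of_nonneg_right (hg _)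
        · exact le_add_of_nonneg_left (hg _)
    _ = 2 * ∑ n ∈ range p, g n := by
        rw [sum_add_distrib, sum_range_reflect g p, two_mul]

lemma summable_inv_add_one_rpow {s : ℝ} (hs : 1 < s) :
    Summable fun n : ℕ => ((n + 1 : ℝ)⁻¹) ^ s := by
  have := (summable_nat_add_iff 1).mpr (Real.summable_nat_rpow_inv.mpr hs)
  refine this.congr fun n => ?_
  rw [Real.inv_rpow (by positivity)]
  push_cast
  rfl

lemma sum_norm_rpow_le_one_of_card_le_one {p : ℕ} [NeZero p] {P : Finset ℕ} (hP : #P ≤ 1)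
    (γ : ZMod p → ℝ) :
    ∑ r : ZMod p, ‖(p : ℂ)⁻¹ * ∑ m ∈ P, eR (m * γ r)‖ ^ ((4 : ℝ) / 3) ≤ 1 := by
  have hp : (1 : ℝ) ≤ p := by exact_mod_cast Nat.one_le_iff_ne_zero.mpr (NeZero.ne p)
  have hterm : ∀ r, ‖(p : ℂ)⁻¹ * ∑ m ∈ P, eR (m * γ r)‖ ≤ (p : ℝ)⁻¹ := by
    intro r
    rw [norm_mul, norm_inv, Complex.norm_natCast]
    calc (p : ℝ)⁻¹ * ‖∑ m ∈ P, eR (m * γ r)‖ ≤ (p : ℝ)⁻¹ * #P := by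
          gcongr
          simpa using norm_sum_le_of_le P fun m _ => (norm_eR (m * γ r)).le
      _ ≤ (p : ℝ)⁻¹ := mul_le_of_le_one_right (by positivity) (by exact_mod_cast hP)
  calc ∑ r : ZMod p, ‖(p : ℂ)⁻¹ * ∑ m ∈ P, eR (m * γ r)‖ ^ ((4 : ℝ) / 3)
      ≤ ∑ _r : ZMod p, (p : ℝ)⁻¹ := by
        refine sum_le_sum fun r _ => ?_
        refine (Real.rpow_le_self_of_le_one (norm_nonneg _) ?_ (by norm_num)).trans (hterm r)
        exact (hterm r).trans (inv_le_one_of_one_le₀ hp)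
    _ = 1 := by simp [ZMod.card]

theorem stmt11 :
    ∃ C : ℝ, 0 < C ∧
      ∀ (N N' a q : ℕ) (p : ℕ) [NeZero p] (_ : p.Prime) (_ : 200 * N ≤ p) (_ : p < 400 * N)
        (β : ℝ) (P : Finset ℕ),
        P = (Finset.Icc 1 N').image (fun n => a + q * n) →
        P ⊆ Finset.Icc 1 N →
        ∀ f₁ : ZMod p → ℂ,
          (f₁ = fun x => if x.val ∈ P then eR (β * x.val) else 0) →
          ∀ fhat : ZMod p → ℂ,
            (fhat = fun r => (p : ℂ)⁻¹ *
              ∑ x : ZMod p, f₁ x * eR (-(x.val * r.val : ℝ) / p)) →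
            ∑ r : ZMod p, ‖fhat r‖ ^ ((4 : ℝ) / 3) ≤ C := by
  set g : ℕ → ℝ := fun n => ((n + 1 : ℝ)⁻¹) ^ ((4 : ℝ) / 3)
  have hg : ∀ n, 0 ≤ g n := fun n => by positivity
  refine ⟨1 + 2 * ∑' n, g n, by positivity, ?_⟩
  rintro N N' a q p _ hp hNp - β P rfl hPN f₁ rfl fhat rfl
  have hPp : ∀ m ∈ (Icc 1 N').image (fun n => a + q * n), m < p := fun m hm => by
    have := mem_Icc.mp (hPN hm); omega
  simp only [sum_indicator_mul_eR_eq hPp]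
  by_cases hdeg : q = 0 ∨ N' = 0
  · have hsum : 0 ≤ ∑' n, g n := tsum_nonneg hg
    refine (sum_norm_rpow_le_one_of_card_le_one ?_ _).trans (by linarith)
    rcases hdeg with rfl | rfl
    · exact card_le_one.mpr fun x hx y hy => by simp at hx hy; omega
    · simp
  push Not at hdeg
  obtain ⟨hq, hN'⟩ := hdeg
  have : Fact p.Prime := ⟨hp⟩
  have hlast := hPN (mem_image_of_mem _ (right_mem_Icc.mpr (Nat.one_le_iff_ne_zero.mpr hN')))
  have hqN' : q * N' < p := by have := mem_Icc.mp hlast; omega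
  have hqp : q < p := (Nat.le_mul_of_pos_right q (Nat.pos_of_ne_zero hN')).trans_lt hqN'
  have hN'p : N' ≤ p := (Nat.le_mul_of_pos_left N' (Nat.pos_of_ne_zero hq)).trans hqN'.le
  have hqz : (q : ZMod p) ≠ 0 := fun h => hq (by rw [← ZMod.val_cast_of_lt hqp, h, ZMod.val_zero])
  calc ∑ r : ZMod p, ‖_‖ ^ ((4 : ℝ) / 3)
      ≤ ∑ r : ZMod p, g (cellDist ((⌊q * β * p⌋ : ZMod p) - (q : ZMod p) * r)) :=
        sum_le_sum fun r _ => Real.rpow_le_rpow (norm_nonneg _)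
          (norm_inv_mul_sum_image_eR_le hq hN'p β r) (by norm_num)
    _ = ∑ s : ZMod p, g (cellDist s) :=
        ((Equiv.mulLeft₀ _ hqz).trans (Equiv.subLeft _)).sum_comp (g ∘ cellDist)
    _ ≤ 2 * ∑' n, g n := by
        grw [sum_cellDist_le hg,
          (summable_inv_add_one_rpow (by norm_num)).sum_le_tsum _ fun n _ => hg n]
    _ ≤ 1 + 2 * ∑' n, g n := by linarith
end
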